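/- arXiv:1207.0535 — 4 statements merged into one kernel-verified Lean document; each statement's English description precedes it below -/
import Mathlib

section
/- Let K and L be regular languages with state complexities m and n. Then the state complexity of K \ Lᴿ (the difference of K with the reversal of L) is at most m·2ⁿ − (m − 1). -/
namespace SCPaper

/-- Reversal of a language. -/
def rev {α : Type} (L : Language α) : Language α := {w | w.reverse ∈ L}

/-- Union of two languages. -/
def lunion {α : Type} (K L : Language α) : Language α := {w | w ∈ K ∨ w ∈ L}

/-- Intersection of two languages. -/
def linter {α : Type} (K L : Language α) : Language α := {w | w ∈ K ∧ w ∈ L}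

/-- Difference of two languages. -/
def ldiff {α : Type} (K L : Language α) : Language α := {w | w ∈ K ∧ w ∉ L}

/-- Symmetric difference of two languages. -/
def lsymm {α : Type} (K L : Language α) : Language α := lunion (ldiff K L) (ldiff L K)

/-- Sizes (numbers of states) of complete DFAs recognizing `L`. -/
def complexitySet {α : Type} (L : Language α) : Set ℕ :=
  {n | ∃ M : DFA α (Fin n), M.accepts = L}

/-- A language is regular if it is recognized by some finite DFA. -/
def Regular {α : Type} (L : Language α) : Prop := (complexitySet L).Nonempty

/-- State complexity: the number of states of a minimal DFA for `L`. -/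
noncomputable def sc {α : Type} (L : Language α) : ℕ := sInf (complexitySet L)

/-- The cyclic permutation (0,1,…,n−1). -/
def cyc (n : ℕ) (i : Fin n) : Fin n :=
  ⟨(i.val + 1) % n, Nat.mod_lt _ (Nat.lt_of_le_of_lt (Nat.zero_le _) i.isLt)⟩

/-- The transposition (0,1). -/
def tp01 (n : ℕ) (i : Fin n) : Fin n :=
  if i.val = 0 then ⟨1 % n, Nat.mod_lt _ (Nat.lt_of_le_of_lt (Nat.zero_le _) i.isLt)⟩
  else if i.val = 1 then ⟨0, Nat.lt_of_le_of_lt (Nat.zero_le _) i.isLt⟩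
  else i

/-- The singular map sending n−1 to 0 and fixing everything else. -/
def sing (n : ℕ) (i : Fin n) : Fin n :=
  if i.val = n - 1 then ⟨0, Nat.lt_of_le_of_lt (Nat.zero_le _) i.isLt⟩ else i

/-- The transposition (n−2, n−1). -/
def tpTop (n : ℕ) (i : Fin n) : Fin n :=
  if i.val = n - 1 then ⟨n - 2, by have := i.isLt; omega⟩
  else if i.val = n - 2 then ⟨n - 1, by have := i.isLt; omega⟩
  else i

/-- The singular map sending n−1 to n−2 and fixing everything else. -/
def singTop (n : ℕ) (i : Fin n) : Fin n :=
  if i.val = n - 1 then ⟨n - 2, by have := i.isLt; omega⟩ else i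

/-- 𝒰ₙ(a,b,∅): binary alphabet, a = cycle (0,…,n−1), b = transposition (0,1),
initial state 0, final state n−1. -/
def U2dfa (n : ℕ) (h : 0 < n) : DFA (Fin 2) (Fin n) where
  step := fun i x => if x = 0 then cyc n i else tp01 n i
  start := ⟨0, h⟩
  accept := {i | i.val = n - 1}

def U2 (n : ℕ) (h : 0 < n) : Language (Fin 2) := (U2dfa n h).accepts

/-- 𝒰ₙ(a,b,c): a = cycle, b = transposition (0,1), c = (n−1 ↦ 0). -/
def Udfa (n : ℕ) (h : 0 < n) : DFA (Fin 3) (Fin n) where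
  step := fun i x => if x = 0 then cyc n i else if x = 1 then tp01 n i else sing n i
  start := ⟨0, h⟩
  accept := {i | i.val = n - 1}

def U (n : ℕ) (h : 0 < n) : Language (Fin 3) := (Udfa n h).accepts

/-- 𝒰ₙ(a,b,c) with final state set {0}. -/
def U0dfa (n : ℕ) (h : 0 < n) : DFA (Fin 3) (Fin n) where
  step := fun i x => if x = 0 then cyc n i else if x = 1 then tp01 n i else sing n i
  start := ⟨0, h⟩
  accept := {i | i.val = 0}

def U0 (n : ℕ) (h : 0 < n) : Language (Fin 3) := (U0dfa n h).accepts

/-- 𝒰ₙ(a,b,c,d): a = cycle, b = transposition (0,1), c = (n−1 ↦ 0), d = identity. -/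
def U4dfa (n : ℕ) (h : 0 < n) : DFA (Fin 4) (Fin n) where
  step := fun i x =>
    if x = 0 then cyc n i else if x = 1 then tp01 n i else if x = 2 then sing n i else i
  start := ⟨0, h⟩
  accept := {i | i.val = n - 1}

def U4 (n : ℕ) (h : 0 < n) : Language (Fin 4) := (U4dfa n h).accepts

/-- 𝒰ₙ(d,c,b,a): d = cycle, c = transposition (0,1), b = (n−1 ↦ 0), a = identity. -/
def U4dcbaDfa (n : ℕ) (h : 0 < n) : DFA (Fin 4) (Fin n) where
  step := fun i x =>
    if x = 3 then cyc n i else if x = 2 then tp01 n i else if x = 1 then sing n i else i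
  start := ⟨0, h⟩
  accept := {i | i.val = n - 1}

def U4dcba (n : ℕ) (h : 0 < n) : Language (Fin 4) := (U4dcbaDfa n h).accepts

/-- 𝒱ₙ(a,b,c,d): a = cycle, b = transposition (n−2,n−1), c = (n−1 ↦ n−2), d = identity. -/
def Vdfa (n : ℕ) (h : 0 < n) : DFA (Fin 4) (Fin n) where
  step := fun i x =>
    if x = 0 then cyc n i else if x = 1 then tpTop n i else if x = 2 then singTop n i else i
  start := ⟨0, h⟩
  accept := {i | i.val = n - 1}

def V (n : ℕ) (h : 0 < n) : Language (Fin 4) := (Vdfa n h).accepts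

/-- 𝒱ₙ(d,c,b,a): d = cycle, c = transposition (n−2,n−1), b = (n−1 ↦ n−2), a = identity. -/
def VdcbaDfa (n : ℕ) (h : 0 < n) : DFA (Fin 4) (Fin n) where
  step := fun i x =>
    if x = 3 then cyc n i else if x = 2 then tpTop n i else if x = 1 then singTop n i else i
  start := ⟨0, h⟩
  accept := {i | i.val = n - 1}

def Vdcba (n : ℕ) (h : 0 < n) : Language (Fin 4) := (VdcbaDfa n h).accepts

/-- Direct product of two DFAs with a chosen set of final states. -/
def prodDFA {α σ₁ σ₂ : Type} (M : DFA α σ₁) (N : DFA α σ₂) (acc : Set (σ₁ × σ₂)) :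
    DFA α (σ₁ × σ₂) where
  step := fun p x => (M.step p.1 x, N.step p.2 x)
  start := (M.start, N.start)
  accept := acc


/-- Chinese-remainder style pairing k ↦ (k mod m, k mod n). -/
def toPair (m n : ℕ) (hm : 0 < m) (hn : 0 < n) (k : Fin (m * n)) : Fin m × Fin n :=
  (⟨k.val % m, Nat.mod_lt _ hm⟩, ⟨k.val % n, Nat.mod_lt _ hn⟩)

/-- Componentwise successor on the product of two cyclic automata. -/
def prodSucc (m n : ℕ) (p : Fin m × Fin n) : Fin m × Fin n := (cyc m p.1, cyc n p.2)

/-- One-letter subset transition of the reversed NFA of 𝒰ₙ(a,b,c). -/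
def rstep (n : ℕ) (h : 0 < n) (S : Set (Fin n)) (x : Fin 3) : Set (Fin n) :=
  {q | (Udfa n h).step q x ∈ S}

/-- Action of a word on subsets in the reversed NFA of 𝒰ₙ(a,b,c). -/
def rword (n : ℕ) (h : 0 < n) (S : Set (Fin n)) (w : List (Fin 3)) : Set (Fin n) :=
  w.foldl (rstep n h) S

end SCPaper

open SCPaper

open SCPaper

/-
In the product of a DFA `M` for `K` with the complement of the subset-construction DFA for `Lᴿ`,
the states whose subset component is the whole state set `Q` of the DFA `N` for `L` form a trap:
every state of `N` has a successor, so the reversed transitions map `Q` onto `Q`; and `Q`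
contains the initial state of `N`, so these states reject. Merging the `m` trap states into a
single state leaves `m·2ⁿ − m + 1` states.
-/

namespace DFA

variable {α σ : Type*}

section Trap

def IsTrap (M : DFA α σ) (T : Set σ) : Prop := ∀ s ∈ T, ∀ a, M.step s a ∈ T

variable (T : Set σ) [DecidablePred (· ∈ T)]

def toCollapseTrap (s : σ) : Option {s // s ∉ T} := if h : s ∈ T then none else some ⟨s, h⟩

/-- The states of `T` are merged into the single state `none`. -/
def collapseTrap (M : DFA α σ) : DFA α (Option {s // s ∉ T}) where
  step o a := o.bind fun s => toCollapseTrap T (M.step s a)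
  start := toCollapseTrap T M.start
  accept := some '' (Subtype.val ⁻¹' M.accept)

variable {T} {M : DFA α σ}

theorem IsTrap.step_toCollapseTrap (hT : M.IsTrap T) (s : σ) (a : α) :
    (M.collapseTrap T).step (toCollapseTrap T s) a = toCollapseTrap T (M.step s a) := by
  by_cases hs : s ∈ T
  · simp [collapseTrap, toCollapseTrap, hs, hT s hs a]
  · simp [collapseTrap, toCollapseTrap, hs]

theorem IsTrap.evalFrom_toCollapseTrap (hT : M.IsTrap T) (s : σ) (w : List α) :
    (M.collapseTrap T).evalFrom (toCollapseTrap T s) w = toCollapseTrap T (M.evalFrom s w) := by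
  induction w generalizing s with
  | nil => rfl
  | cons a w ih => rw [evalFrom_cons, evalFrom_cons, hT.step_toCollapseTrap, ih]

theorem toCollapseTrap_mem_accept (hacc : Disjoint T M.accept) (s : σ) :
    toCollapseTrap T s ∈ (M.collapseTrap T).accept ↔ s ∈ M.accept := by
  by_cases hs : s ∈ T
  · simp [collapseTrap, toCollapseTrap, hs, hacc.notMem_of_mem_left hs]
  · simp [collapseTrap, toCollapseTrap, hs]

theorem IsTrap.accepts_collapseTrap (hT : M.IsTrap T) (hacc : Disjoint T M.accept) :
    (M.collapseTrap T).accepts = M.accepts := by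
  ext w
  change (M.collapseTrap T).evalFrom (toCollapseTrap T M.start) w ∈ (M.collapseTrap T).accept ↔
    M.eval w ∈ M.accept
  rw [hT.evalFrom_toCollapseTrap]
  exact toCollapseTrap_mem_accept hacc _

theorem card_collapseTrap [Fintype σ] [Fintype ↥T] :
    Fintype.card (Option {s // s ∉ T}) = Fintype.card σ - Fintype.card ↥T + 1 := by
  rw [Fintype.card_option, Fintype.card_subtype_compl]

end Trap

theorem accepts_toNFA_reverse_toDFA (M : DFA α σ) :
    M.toNFA.reverse.toDFA.accepts = M.accepts.reverse := by
  ext w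
  rw [NFA.toDFA_correct, NFA.mem_accepts_reverse, toNFA_correct, Language.mem_reverse]

theorem toNFA_reverse_stepSet_univ (M : DFA α σ) (a : α) :
    M.toNFA.reverse.stepSet Set.univ a = Set.univ :=
  Set.eq_univ_of_forall fun s => NFA.mem_stepSet.2 ⟨M.step s a, Set.mem_univ _, rfl⟩

theorem univ_mem_toNFA_reverse_toDFA_accept (M : DFA α σ) :
    Set.univ ∈ M.toNFA.reverse.toDFA.accept :=
  ⟨M.start, Set.mem_univ _, rfl⟩

end DFA

namespace SCPaper

universe u

theorem exists_dfa_card_sc {α : Type} {L : Language α} (hL : Regular L) :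
    ∃ M : DFA α (Fin (sc L)), M.accepts = L :=
  Nat.sInf_mem hL

theorem sc_accepts_le_card {α : Type} {σ : Type*} [Fintype σ] (M : DFA α σ) :
    sc M.accepts ≤ Fintype.card σ :=
  Nat.sInf_le ⟨M.reindex (Fintype.equivFin σ), M.accepts_reindex _⟩

theorem sc_accepts_le_of_isTrap {α : Type} {σ : Type*} [Fintype σ] {M : DFA α σ} {T : Set σ}
    [DecidablePred (· ∈ T)] (hT : M.IsTrap T) (hacc : Disjoint T M.accept) :
    sc M.accepts ≤ Fintype.card σ - Fintype.card T + 1 := by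
  rw [← hT.accepts_collapseTrap hacc, ← DFA.card_collapseTrap]
  exact sc_accepts_le_card _

theorem sc_inf_compl_reverse_le {α : Type} {σ τ : Type u} [Fintype σ] [Fintype τ]
    (M : DFA α σ) (N : DFA α τ) :
    sc (M.accepts ⊓ N.accepts.reverseᶜ) ≤
      Fintype.card σ * 2 ^ Fintype.card τ - Fintype.card σ + 1 := by
  classical
  let P := M.inter N.toNFA.reverse.toDFAᶜ
  let T : Set (σ × Set τ) := {p | p.2 = Set.univ}
  have hT : P.IsTrap T := by
    rintro p (hp : p.2 = Set.univ) a
    change N.toNFA.reverse.stepSet p.2 a = Set.univ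
    rw [hp, N.toNFA_reverse_stepSet_univ]
  have hacc : Disjoint T P.accept := Set.disjoint_left.2 fun p (hp : p.2 = Set.univ) hpacc =>
    hpacc.2 (hp ▸ N.univ_mem_toNFA_reverse_toDFA_accept)
  have hcardT : Fintype.card T = Fintype.card σ := Fintype.card_congr
    ⟨fun p => p.1.1, fun s => ⟨(s, Set.univ), rfl⟩, fun p => Subtype.ext (Prod.ext rfl p.2.symm),
      fun _ => rfl⟩
  calc sc (M.accepts ⊓ N.accepts.reverseᶜ) = sc P.accepts := by
        rw [DFA.accepts_inter, DFA.accepts_compl, DFA.accepts_toNFA_reverse_toDFA]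
    _ ≤ Fintype.card (σ × Set τ) - Fintype.card T + 1 := sc_accepts_le_of_isTrap hT hacc
    _ = Fintype.card σ * 2 ^ Fintype.card τ - Fintype.card σ + 1 := by
        rw [Fintype.card_prod, Fintype.card_set, hcardT]

end SCPaper

theorem diff_reversed_right_upper_bound {α : Type} (K L : Language α) (m n : ℕ)
    (hK : Regular K) (hL : Regular L) (hm : sc K = m) (hn : sc L = n) :
    sc (ldiff K (rev L)) ≤ m * 2 ^ n - (m - 1) := by
  obtain ⟨M, rfl⟩ : ∃ M : DFA α (Fin m), M.accepts = K := hm ▸ exists_dfa_card_sc hK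
  obtain ⟨N, rfl⟩ : ∃ N : DFA α (Fin n), N.accepts = L := hn ▸ exists_dfa_card_sc hL
  have hbound := sc_inf_compl_reverse_le M N
  rw [Fintype.card_fin, Fintype.card_fin] at hbound
  have hm0 : 0 < m := Fin.pos M.start
  have hm2 : m ≤ m * 2 ^ n := Nat.le_mul_of_pos_right m (Nat.two_pow_pos n)
  exact hbound.trans_eq (by omega)
end

section
/- Let K and L be regular languages with state complexities m and n. Then the state complexity of Kᴿ ⊕ Lᴿ is at most 2^{m+n−1}. -/
open SCPaper

/-! Reversing a complete DFA and determinizing yields a DFA on subsets whose transitions are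
preimages, so they commute with complementation, while complementation flips the acceptance
condition `start ∈ S`. In the product automaton for `Kᴿ ⊕ Lᴿ` the states `(S, T)` and `(Sᶜ, Tᶜ)`
are therefore interchangeable, and every state can be retracted onto the one of the two that
avoids the start state of the first automaton: there are `2 ^ (m - 1) * 2 ^ n` of these. -/

theorem sc_le_natCard {α σ : Type} [Finite σ] (M : DFA α σ) : sc M.accepts ≤ Nat.card σ :=
  Nat.sInf_le ⟨DFA.reindex (Finite.equivFin σ) M, M.accepts_reindex _⟩

section ComplNormalize

variable {β : Type*} [BooleanAlgebra β] (P : β → Prop)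

open Classical in
noncomputable def complNormalize (p : β) : β := if P p then pᶜ else p

variable {P}

theorem complNormalize_eq_or (p : β) : complNormalize P p = p ∨ complNormalize P p = pᶜ := by
  by_cases h : P p <;> simp [complNormalize, h]

theorem complNormalize_compl (hP : ∀ p, P pᶜ ↔ ¬P p) (p : β) :
    complNormalize P pᶜ = complNormalize P p := by
  by_cases h : P p <;> simp [complNormalize, h, hP]

theorem range_complNormalize_subset (hP : ∀ p, P pᶜ ↔ ¬P p) :
    Set.range (complNormalize P) ⊆ {p | ¬P p} := by
  rintro _ ⟨p, rfl⟩
  by_cases h : P p <;> simp [complNormalize, h, hP]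

end ComplNormalize

namespace DFA

variable {α σ : Type*}

def retract (M : DFA α σ) (r : σ → σ) : DFA α (Set.range r) where
  step s a := ⟨r (M.step s a), Set.mem_range_self _⟩
  start := ⟨r M.start, Set.mem_range_self _⟩
  accept := {s | ↑s ∈ M.accept}

section Retract

variable {M : DFA α σ} {r : σ → σ}

theorem evalFrom_retract (hstep : ∀ p a, r (M.step (r p) a) = r (M.step p a)) (p : σ)
    (w : List α) :
    ((M.retract r).evalFrom ⟨r p, Set.mem_range_self _⟩ w : σ) = r (M.evalFrom p w) := by
  induction w generalizing p with
  | nil => rfl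
  | cons a w ih =>
    have hone : (M.retract r).step ⟨r p, Set.mem_range_self _⟩ a =
        ⟨r (M.step p a), Set.mem_range_self _⟩ := Subtype.ext (hstep p a)
    rw [evalFrom_cons, hone, ih, evalFrom_cons]

theorem accepts_retract (hstep : ∀ p a, r (M.step (r p) a) = r (M.step p a))
    (hacc : ∀ p, r p ∈ M.accept ↔ p ∈ M.accept) : (M.retract r).accepts = M.accepts := by
  ext w
  change ((M.retract r).evalFrom ⟨r M.start, _⟩ w : σ) ∈ M.accept ↔ M.evalFrom M.start w ∈ M.accept
  rw [evalFrom_retract hstep, hacc]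

end Retract

theorem accepts_retract_complNormalize {β : Type*} [BooleanAlgebra β] {P : β → Prop}
    {M : DFA α β} (hP : ∀ p, P pᶜ ↔ ¬P p) (hstep : ∀ p a, M.step pᶜ a = (M.step p a)ᶜ)
    (hacc : ∀ p, pᶜ ∈ M.accept ↔ p ∈ M.accept) :
    (M.retract (complNormalize P)).accepts = M.accepts := by
  refine accepts_retract (fun p a => ?_) (fun p => ?_)
  · rcases complNormalize_eq_or (P := P) p with h | h <;> rw [h]
    rw [hstep, complNormalize_compl hP]
  · rcases complNormalize_eq_or (P := P) p with h | h <;> rw [h]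
    exact hacc p

variable (M : DFA α σ)

theorem toNFA_reverse_stepSet (S : Set σ) (a : α) :
    M.toNFA.reverse.stepSet S a = (M.step · a) ⁻¹' S := by
  ext
  simp [NFA.stepSet]

theorem toNFA_reverse_toDFA_step_compl (S : Set σ) (a : α) :
    M.toNFA.reverse.toDFA.step Sᶜ a = (M.toNFA.reverse.toDFA.step S a)ᶜ := by
  simp only [NFA.toDFA, toNFA_reverse_stepSet, Set.preimage_compl]

theorem mem_toNFA_reverse_toDFA_accept {S : Set σ} :
    S ∈ M.toNFA.reverse.toDFA.accept ↔ M.start ∈ S := by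
  simp [NFA.toDFA]

theorem toNFA_reverse_toDFA_accepts : M.toNFA.reverse.toDFA.accepts = M.accepts.reverse := by
  ext w
  simp [Language.mem_reverse, NFA.mem_accepts_reverse]

end DFA

theorem ncard_setOf_notMem_fst {σ τ : Type*} [Finite σ] [Finite τ] (s : σ) :
    {p : Set σ × Set τ | s ∉ p.1}.ncard = 2 ^ (Nat.card σ - 1) * 2 ^ Nat.card τ := by
  have hset : {p : Set σ × Set τ | s ∉ p.1} = 𝒫 {s}ᶜ ×ˢ 𝒫 Set.univ := by
    ext
    simp [Set.subset_compl_singleton_iff]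
  rw [hset, Set.ncard_prod, Set.ncard_powerset, Set.ncard_powerset, Set.ncard_compl,
    Set.ncard_singleton, Set.ncard_univ]

section Product

variable {α σ₁ σ₂ : Type} (M : DFA α σ₁) (N : DFA α σ₂)

theorem prodDFA_evalFrom (acc : Set (σ₁ × σ₂)) (p : σ₁ × σ₂) (w : List α) :
    (prodDFA M N acc).evalFrom p w = (M.evalFrom p.1 w, N.evalFrom p.2 w) := by
  induction w generalizing p with
  | nil => rfl
  | cons a w ih => exact ih _

theorem prodDFA_accepts_xor :
    (prodDFA M N {p | Xor (p.1 ∈ M.accept) (p.2 ∈ N.accept)}).accepts =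
      lsymm M.accepts N.accepts := by
  ext w
  rw [DFA.mem_accepts, DFA.eval, prodDFA_evalFrom]
  rfl

noncomputable def revSymmDiffDFA : DFA α (Set σ₁ × Set σ₂) :=
  prodDFA M.toNFA.reverse.toDFA N.toNFA.reverse.toDFA
    {p | Xor (p.1 ∈ M.toNFA.reverse.toDFA.accept) (p.2 ∈ N.toNFA.reverse.toDFA.accept)}

theorem revSymmDiffDFA_accepts :
    (revSymmDiffDFA M N).accepts = lsymm (rev M.accepts) (rev N.accepts) := by
  rw [revSymmDiffDFA, prodDFA_accepts_xor, M.toNFA_reverse_toDFA_accepts,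
    N.toNFA_reverse_toDFA_accepts]
  rfl

theorem revSymmDiffDFA_step_compl (p : Set σ₁ × Set σ₂) (a : α) :
    (revSymmDiffDFA M N).step pᶜ a = ((revSymmDiffDFA M N).step p a)ᶜ :=
  Prod.ext (M.toNFA_reverse_toDFA_step_compl p.1 a) (N.toNFA_reverse_toDFA_step_compl p.2 a)

theorem compl_mem_revSymmDiffDFA_accept (p : Set σ₁ × Set σ₂) :
    pᶜ ∈ (revSymmDiffDFA M N).accept ↔ p ∈ (revSymmDiffDFA M N).accept := by
  simp only [revSymmDiffDFA, prodDFA, Set.mem_ofPred_eq, DFA.mem_toNFA_reverse_toDFA_accept,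
    fst_compl, snd_compl, Set.mem_compl_iff, xor_not_not]

theorem sc_lsymm_rev_le [Finite σ₁] [Finite σ₂] :
    sc (lsymm (rev M.accepts) (rev N.accepts)) ≤ 2 ^ (Nat.card σ₁ - 1) * 2 ^ Nat.card σ₂ := by
  let P : Set σ₁ × Set σ₂ → Prop := fun p => M.start ∈ p.1
  have hP : ∀ p, P pᶜ ↔ ¬P p := fun _ => Iff.rfl
  calc sc (lsymm (rev M.accepts) (rev N.accepts))
      = sc ((revSymmDiffDFA M N).retract (complNormalize P)).accepts := by
        rw [DFA.accepts_retract_complNormalize hP (revSymmDiffDFA_step_compl M N)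
          (compl_mem_revSymmDiffDFA_accept M N), revSymmDiffDFA_accepts]
    _ ≤ (Set.range (complNormalize P)).ncard := by
        rw [← Nat.card_coe_set_eq]
        exact sc_le_natCard _
    _ ≤ {p | ¬P p}.ncard := Set.ncard_le_ncard (range_complNormalize_subset hP)
    _ = 2 ^ (Nat.card σ₁ - 1) * 2 ^ Nat.card σ₂ := ncard_setOf_notMem_fst M.start

end Product

theorem symmdiff_two_reversed_upper_bound {α : Type} (K L : Language α) (m n : ℕ)
    (hK : Regular K) (hL : Regular L) (hm : sc K = m) (hn : sc L = n) :
    sc (lsymm (rev K) (rev L)) ≤ 2 ^ (m + n - 1) := by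
  obtain ⟨M, rfl⟩ : m ∈ complexitySet K := hm ▸ Nat.sInf_mem hK
  obtain ⟨N, rfl⟩ : n ∈ complexitySet L := hn ▸ Nat.sInf_mem hL
  have hm_pos : 0 < m := M.start.pos
  calc sc (lsymm (rev M.accepts) (rev N.accepts))
      ≤ 2 ^ (Nat.card (Fin m) - 1) * 2 ^ Nat.card (Fin n) := sc_lsymm_rev_le M N
    _ = 2 ^ (m + n - 1) := by
        rw [Nat.card_fin, Nat.card_fin, ← pow_add]
        congr 1
        omega
end

section
/- Let m, n ≥ 3 with m ≠ n. Then the state complexity of Uₘ(a,b,∅) ∪ Uₙ(a,b,∅) is exactly mn, where Uₖ(a,b,∅) is the language of the k-state DFA over {a, b} with states {0,…,k−1}, initial state 0, final state k−1, in which a acts as the cycle (0,1,…,k−1) and b as the transposition (0,1). -/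
open SCPaper

open SCPaper

/-!
Read in `ZMod k`, the letter `a` of `𝒰ₖ(a,b,∅)` adds one and `b` swaps `0` and `1`; the union is
recognised by the product automaton on `ZMod m × ZMod n`, and it suffices to show that this automaton
is minimal. Exchanging the factors, assume `n ∤ m`. Every state is reachable: `ab` fixes `0` in
`ZMod m` and cycles the nonzero residues of `ZMod n`, starting from `(0, m) = aᵐ(0, 0)`. Powers of
`a` separate states with different first coordinates because `n ∤ m`, and states with different
second coordinates when `m ∤ n`. When `m ∣ n` they fail only if both second coordinates reduce
modulo `m` to the common first coordinate, and a single `b` breaks that coincidence.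
-/

namespace DFA

universe u

variable {α σ σ' : Type*} {σ₁ σ₂ : Type u}

theorem evalFrom_union (M₁ : DFA α σ₁) (M₂ : DFA α σ₂) (s : σ₁ × σ₂) (w : List α) :
    (M₁.union M₂).evalFrom s w = (M₁.evalFrom s.1 w, M₂.evalFrom s.2 w) := by
  induction w generalizing s with
  | nil => rfl
  | cons a w ih => exact ih _

theorem acceptsFrom_evalFrom (M : DFA α σ) (s : σ) (w : List α) :
    M.acceptsFrom (M.evalFrom s w) = (M.acceptsFrom s).leftQuotient w := by
  ext u
  simp only [Language.mem_leftQuotient, mem_acceptsFrom, evalFrom_of_append]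

theorem accepts_eq_of_hom (M : DFA α σ) (N : DFA α σ') (f : σ → σ')
    (hstep : ∀ s a, f (M.step s a) = N.step (f s) a) (hstart : f M.start = N.start)
    (haccept : ∀ s, f s ∈ N.accept ↔ s ∈ M.accept) : M.accepts = N.accepts := by
  have heval : ∀ s w, f (M.evalFrom s w) = N.evalFrom (f s) w := by
    intro s w
    induction w generalizing s with
    | nil => rfl
    | cons a w ih => rw [evalFrom_cons, evalFrom_cons, ih, hstep]
  ext w
  rw [mem_accepts, mem_accepts, eval, eval, ← hstart, ← heval, haccept]

theorem card_le_of_accepts_eq [Fintype σ] [Fintype σ'] {M : DFA α σ}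
    (hreach : Function.Surjective M.eval) (hdist : Function.Injective M.acceptsFrom)
    (N : DFA α σ') (h : N.accepts = M.accepts) : Fintype.card σ ≤ Fintype.card σ' := by
  choose w hw using hreach
  refine Fintype.card_le_of_injective (fun s => N.eval (w s)) fun s t hst => hdist ?_
  have hquot : ∀ s, M.acceptsFrom s = N.acceptsFrom (N.eval (w s)) := fun s => by
    rw [← Language.leftQuotient_accepts_apply, h, Language.leftQuotient_accepts_apply, hw]
  rw [hquot, hquot]
  exact congrArg N.acceptsFrom hst

end DFA

namespace SCPaper

theorem lunion_eq_add {α : Type} (K L : Language α) : lunion K L = K + L := rfl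

theorem sc_accepts_eq_card {α σ : Type} [Fintype σ] {M : DFA α σ}
    (hreach : Function.Surjective M.eval) (hdist : Function.Injective M.acceptsFrom) :
    sc M.accepts = Fintype.card σ := by
  have hmem : Fintype.card σ ∈ complexitySet M.accepts :=
    ⟨DFA.reindex (Fintype.equivFin σ) M, DFA.accepts_reindex _ _⟩
  refine le_antisymm (Nat.sInf_le hmem) (le_csInf ⟨_, hmem⟩ ?_)
  rintro k ⟨N, hN⟩
  simpa using DFA.card_le_of_accepts_eq hreach hdist N hN

/-- `𝒰ₖ(a,b,∅)` with the state `i` read as `(i : ZMod k)`, so that the final state is `-1`. -/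
def cycSwapDFA (k : ℕ) : DFA (Fin 2) (ZMod k) where
  step x c := if c = 0 then x + 1 else Equiv.swap 0 1 x
  start := 0
  accept := {-1}

section Transfer

variable {k : ℕ}

theorem natCast_val_cyc (i : Fin k) : ((cyc k i : ℕ) : ZMod k) = (i : ℕ) + 1 := by
  simp only [cyc, ZMod.natCast_mod, Nat.cast_add, Nat.cast_one]

theorem natCast_val_tp01 (i : Fin k) :
    ((tp01 k i : ℕ) : ZMod k) = Equiv.swap 0 1 ((i : ℕ) : ZMod k) := by
  unfold tp01
  split_ifs with h0 h1
  · simp [h0, ZMod.natCast_mod]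
  · simp [h1]
  · have hk : 1 < k := by omega
    refine (Equiv.swap_apply_of_ne_of_ne ?_ ?_).symm
    · rw [Ne, ZMod.natCast_eq_zero_iff]
      exact fun hdvd => h0 (Nat.eq_zero_of_dvd_of_lt hdvd i.isLt)
    · rw [Ne, ← Nat.cast_one, ZMod.natCast_eq_natCast_iff', Nat.mod_eq_of_lt i.isLt,
        Nat.mod_eq_of_lt hk]
      exact h1

theorem natCast_val_eq_neg_one_iff (i : Fin k) : ((i : ℕ) : ZMod k) = -1 ↔ (i : ℕ) = k - 1 := by
  rw [eq_neg_iff_add_eq_zero, ← Nat.cast_one, ← Nat.cast_add, ZMod.natCast_eq_zero_iff]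
  constructor
  · intro hdvd
    have := Nat.le_of_dvd (Nat.succ_pos _) hdvd
    have := i.isLt
    omega
  · intro h
    rw [h, Nat.sub_add_cancel (Nat.one_le_of_lt i.isLt)]

theorem U2_eq_accepts_cycSwapDFA (hk : 0 < k) : U2 k hk = (cycSwapDFA k).accepts := by
  refine DFA.accepts_eq_of_hom _ _ (fun i : Fin k => ((i : ℕ) : ZMod k)) ?_
    (by simp [U2dfa, cycSwapDFA]) ?_
  · intro i c
    by_cases hc : c = 0
    · simp only [U2dfa, cycSwapDFA, hc, if_true, natCast_val_cyc]
    · simp only [U2dfa, cycSwapDFA, hc, if_false, natCast_val_tp01]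
  · intro i
    exact natCast_val_eq_neg_one_iff i

end Transfer

section CycSwap

variable {m n : ℕ}

@[simp]
theorem cycSwapDFA_start : (cycSwapDFA n).start = 0 := rfl

@[simp]
theorem cycSwapDFA_step_zero (x : ZMod n) : (cycSwapDFA n).step x 0 = x + 1 := rfl

@[simp]
theorem cycSwapDFA_step_one (x : ZMod n) : (cycSwapDFA n).step x 1 = Equiv.swap 0 1 x := rfl

theorem cycSwapDFA_evalFrom_replicate (x : ZMod n) (t : ℕ) :
    (cycSwapDFA n).evalFrom x (List.replicate t 0) = x + t := by
  induction t generalizing x with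
  | zero => simp
  | succ t ih =>
    rw [List.replicate_succ, DFA.evalFrom_cons, cycSwapDFA_step_zero, ih]
    push_cast
    ring

theorem replicate_mem_acceptsFrom_cycSwapDFA (x : ZMod n) (t : ℕ) :
    List.replicate t 0 ∈ (cycSwapDFA n).acceptsFrom x ↔ x + t = -1 := by
  rw [DFA.mem_acceptsFrom, cycSwapDFA_evalFrom_replicate]
  rfl

/-- Words `aᵗ` with `t ≡ -1 - x (mod m)` are accepted from `x`; if the two quotients agreed,
two of them, `m` letters apart, would be accepted from the same `y'`, forcing `n ∣ m`. -/
theorem eq_of_acceptsFrom_add_eq [NeZero m] (hnm : (m : ZMod n) ≠ 0) {x x' : ZMod m}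
    {y y' : ZMod n}
    (h : (cycSwapDFA m).acceptsFrom x + (cycSwapDFA n).acceptsFrom y =
      (cycSwapDFA m).acceptsFrom x' + (cycSwapDFA n).acceptsFrom y') : x = x' := by
  by_contra hne
  have haccepted : ∀ t : ℕ, (t : ZMod m) = -1 - x → y' + t = -1 := by
    intro t ht
    have hmem : List.replicate t 0 ∈ (cycSwapDFA m).acceptsFrom x + (cycSwapDFA n).acceptsFrom y :=
      (Language.mem_add _ _ _).2 (Or.inl (by
        rw [replicate_mem_acceptsFrom_cycSwapDFA, ht]
        ring))
    rw [h, Language.mem_add, replicate_mem_acceptsFrom_cycSwapDFA,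
      replicate_mem_acceptsFrom_cycSwapDFA, ht] at hmem
    exact hmem.resolve_left fun h' => hne (by linear_combination -h')
  set T := (-1 - x).val
  have hT : (T : ZMod m) = -1 - x := ZMod.natCast_zmod_val _
  have h₁ := haccepted T hT
  have h₂ := haccepted (T + m) (by rw [Nat.cast_add, ZMod.natCast_self, add_zero, hT])
  apply hnm
  push_cast at h₂
  linear_combination h₂ - h₁

theorem acceptsFrom_add_ne_of_ne_cast [NeZero n] (hdvd : m ∣ n) {x : ZMod m} {y y' : ZMod n}
    (hy : y ≠ y') (hx : x ≠ ZMod.castHom hdvd (ZMod m) y) :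
    (cycSwapDFA m).acceptsFrom x + (cycSwapDFA n).acceptsFrom y ≠
      (cycSwapDFA m).acceptsFrom x + (cycSwapDFA n).acceptsFrom y' := by
  intro h
  set T := (-1 - y).val
  have hT : (T : ZMod n) = -1 - y := ZMod.natCast_zmod_val _
  have hTm : (T : ZMod m) = -1 - ZMod.castHom hdvd (ZMod m) y := by
    rw [← map_natCast (ZMod.castHom hdvd (ZMod m)), hT, map_sub, map_neg, map_one]
  have hmem : List.replicate T 0 ∈ (cycSwapDFA m).acceptsFrom x + (cycSwapDFA n).acceptsFrom y :=
    (Language.mem_add _ _ _).2 (Or.inr (by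
      rw [replicate_mem_acceptsFrom_cycSwapDFA, hT]
      ring))
  rw [h, Language.mem_add, replicate_mem_acceptsFrom_cycSwapDFA,
    replicate_mem_acceptsFrom_cycSwapDFA, hT, hTm] at hmem
  rcases hmem with h' | h'
  · exact hx (by linear_combination h')
  · exact hy (by linear_combination -h')

theorem union_acceptsFrom_ne_of_dvd [NeZero n] (hm : 2 ≤ m) (hdvd : m ∣ n) (x : ZMod m)
    {y y' : ZMod n} (hy : y ≠ y') :
    ((cycSwapDFA m).union (cycSwapDFA n)).acceptsFrom (x, y) ≠
      ((cycSwapDFA m).union (cycSwapDFA n)).acceptsFrom (x, y') := by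
  set π := ZMod.castHom hdvd (ZMod m)
  intro h
  have hadd := h
  rw [DFA.acceptsFrom_union, DFA.acceptsFrom_union] at hadd
  by_cases hxy : x = π y
  swap
  · exact acceptsFrom_add_ne_of_ne_cast hdvd hy hxy hadd
  by_cases hxy' : x = π y'
  swap
  · exact acceptsFrom_add_ne_of_ne_cast hdvd hy.symm hxy' hadd.symm
  -- `aᵗ b` with `t ≡ -y (mod n)` sends `(x, y)` to `(1, 1)` and `(x, y')` to `(1, y' - y)`,
  -- and `y' - y ≡ 0 ≢ 1 (mod m)` is caught by `acceptsFrom_add_ne_of_ne_cast`.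
  have hm1 : (1 : ZMod m) ≠ 0 := by
    have : Fact (1 < m) := ⟨by omega⟩
    exact one_ne_zero
  have hπd : π (y' - y) = 0 := by rw [map_sub, ← hxy, ← hxy', sub_self]
  have hd0 : y' - y ≠ 0 := sub_ne_zero.2 hy.symm
  have hd1 : y' - y ≠ 1 := fun h1 => hm1 (by rw [← map_one π, ← h1, hπd])
  set t := (-y).val
  have htn : (t : ZMod n) = -y := ZMod.natCast_zmod_val _
  have htm : (t : ZMod m) = -x := by rw [← map_natCast π, htn, map_neg, hxy]
  have heval : ∀ z, ((cycSwapDFA m).union (cycSwapDFA n)).evalFrom (x, z)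
      (List.replicate t 0 ++ [1]) = (1, Equiv.swap 0 1 (z - y)) := by
    intro z
    rw [DFA.evalFrom_union]
    simp only [DFA.evalFrom_append_singleton, cycSwapDFA_evalFrom_replicate,
      cycSwapDFA_step_one, htn, htm, add_neg_cancel, Equiv.swap_apply_left, sub_eq_add_neg]
  have hw : ((cycSwapDFA m).union (cycSwapDFA n)).acceptsFrom
      (((cycSwapDFA m).union (cycSwapDFA n)).evalFrom (x, y) (List.replicate t 0 ++ [1])) =
      ((cycSwapDFA m).union (cycSwapDFA n)).acceptsFrom
      (((cycSwapDFA m).union (cycSwapDFA n)).evalFrom (x, y') (List.replicate t 0 ++ [1])) := by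
    rw [DFA.acceptsFrom_evalFrom, DFA.acceptsFrom_evalFrom, h]
  rw [heval, heval, sub_self, Equiv.swap_apply_left, Equiv.swap_apply_of_ne_of_ne hd0 hd1,
    DFA.acceptsFrom_union, DFA.acceptsFrom_union] at hw
  exact acceptsFrom_add_ne_of_ne_cast hdvd hd1 (by rwa [hπd]) hw.symm

theorem union_acceptsFrom_injective [NeZero m] [NeZero n] (hm : 2 ≤ m)
    (hnm : (m : ZMod n) ≠ 0) :
    Function.Injective ((cycSwapDFA m).union (cycSwapDFA n)).acceptsFrom := by
  rintro ⟨x, y⟩ ⟨x', y'⟩ h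
  have hadd := h
  rw [DFA.acceptsFrom_union, DFA.acceptsFrom_union] at hadd
  obtain rfl := eq_of_acceptsFrom_add_eq hnm hadd
  by_cases hdvd : m ∣ n
  · by_contra hne
    exact union_acceptsFrom_ne_of_dvd hm hdvd x (fun hyy => hne (by rw [hyy])) h
  · have hmn : (n : ZMod m) ≠ 0 := by rwa [Ne, ZMod.natCast_eq_zero_iff]
    rw [add_comm, add_comm ((cycSwapDFA m).acceptsFrom x)] at hadd
    rw [eq_of_acceptsFrom_add_eq hmn hadd]

theorem swap_zero_one_natCast_succ (n v : ℕ) (hv : 1 ≤ v) (hvn : v + 1 < n) :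
    Equiv.swap 0 1 ((v : ZMod n) + 1) = ((v + 1 : ℕ) : ZMod n) := by
  rw [← Nat.cast_succ]
  refine Equiv.swap_apply_of_ne_of_ne ?_ ?_
  · rw [Ne, ZMod.natCast_eq_zero_iff]
    exact fun hdvd => Nat.succ_ne_zero v (Nat.eq_zero_of_dvd_of_lt hdvd hvn)
  · rw [Ne, ← Nat.cast_one, ZMod.natCast_eq_natCast_iff', Nat.mod_eq_of_lt hvn,
      Nat.mod_eq_of_lt (by omega)]
    omega

theorem union_eval_surjective [NeZero m] [NeZero n] (hnm : (m : ZMod n) ≠ 0) :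
    Function.Surjective ((cycSwapDFA m).union (cycSwapDFA n)).eval := by
  set P := (cycSwapDFA m).union (cycSwapDFA n)
  have hR : ∀ s w, s ∈ Set.range P.eval → P.evalFrom s w ∈ Set.range P.eval := by
    rintro _ w ⟨v, rfl⟩
    exact ⟨v ++ w, DFA.evalFrom_of_append _ _ _ _⟩
  have hab : ∀ z, (0, z) ∈ Set.range P.eval →
      (0, Equiv.swap 0 1 (z + 1)) ∈ Set.range P.eval := by
    intro z hz
    simpa [P, DFA.evalFrom_union] using hR _ [0, 1] hz
  have hup : ∀ v₀ v : ℕ, 1 ≤ v₀ → v₀ ≤ v → v < n → (0, (v₀ : ZMod n)) ∈ Set.range P.eval →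
      (0, (v : ZMod n)) ∈ Set.range P.eval := by
    intro v₀ v hv₀ hv hvn h₀
    induction v, hv using Nat.le_induction with
    | base => exact h₀
    | succ v hv ih =>
      rw [← swap_zero_one_natCast_succ n v (hv₀.trans hv) hvn]
      exact hab _ (ih (by omega))
  have hreach_m : (0, (m : ZMod n)) ∈ Set.range P.eval :=
    ⟨List.replicate m 0, by
      simp [P, DFA.eval, DFA.evalFrom_union, cycSwapDFA_evalFrom_replicate]⟩
  have hlast : (0, ((n - 1 : ℕ) : ZMod n)) ∈ Set.range P.eval :=
    hup _ _ (ZMod.val_pos.2 hnm) (by have := ZMod.val_lt (m : ZMod n); omega)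
      (Nat.sub_lt (NeZero.pos n) one_pos) (by rwa [ZMod.natCast_zmod_val])
  have hone : (0, (1 : ZMod n)) ∈ Set.range P.eval := by
    have := hab _ hlast
    rwa [Nat.cast_sub (NeZero.one_le), ZMod.natCast_self, Nat.cast_one, zero_sub,
      neg_add_cancel, Equiv.swap_apply_left] at this
  have hzero : ∀ z : ZMod n, (0, z) ∈ Set.range P.eval := by
    intro z
    rcases eq_or_ne z 0 with rfl | hz
    · exact ⟨[], rfl⟩
    · rw [← ZMod.natCast_zmod_val z]
      exact hup 1 _ le_rfl (ZMod.val_pos.2 hz) (ZMod.val_lt z) (by rwa [Nat.cast_one])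
  rintro ⟨x, y⟩
  simpa [P, DFA.evalFrom_union, cycSwapDFA_evalFrom_replicate, ZMod.natCast_zmod_val] using
    hR _ (List.replicate x.val 0) (hzero (y - (x.val : ZMod n)))

theorem sc_cycSwapDFA_accepts_add [NeZero m] [NeZero n] (hm : 2 ≤ m) (hnm : (m : ZMod n) ≠ 0) :
    sc ((cycSwapDFA m).accepts + (cycSwapDFA n).accepts) = m * n := by
  rw [← DFA.accepts_union,
    sc_accepts_eq_card (union_eval_surjective hnm) (union_acceptsFrom_injective hm hnm),
    Fintype.card_prod, ZMod.card, ZMod.card]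

end CycSwap

end SCPaper

theorem union_same_stream_tight (m n : ℕ) (hm : 3 ≤ m) (hn : 3 ≤ n) (hmn : m ≠ n) :
    sc (lunion (U2 m (by omega)) (U2 n (by omega))) = m * n := by
  have : NeZero m := ⟨by omega⟩
  have : NeZero n := ⟨by omega⟩
  rw [lunion_eq_add, U2_eq_accepts_cycSwapDFA, U2_eq_accepts_cycSwapDFA]
  by_cases hnm : n ∣ m
  · have hmn' : ¬m ∣ n := fun h => hmn (Nat.dvd_antisymm h hnm)
    rw [add_comm, mul_comm]
    exact sc_cycSwapDFA_accepts_add (by omega) (by rwa [Ne, ZMod.natCast_eq_zero_iff])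
  · exact sc_cycSwapDFA_accepts_add (by omega) (by rwa [Ne, ZMod.natCast_eq_zero_iff])
end

section
/- In the subset-construction DFA obtained from the reverse of 𝒰ₙ(a,b,c) (n ≥ 3), for any two distinct subsets S, T ⊆ {0,…,n−1} there exists a word w over {a,b,c} taking the pair (S, T) to the pair (full set, empty set) or (empty set, full set). Specifically, if j ∈ S \ T, then the word aʲ·(c·a^{n−1})^{n−2}·c maps S to {0,…,n−1} and T to ∅. -/
/-! The subset automaton of the reversed DFA acts on a set `S` by pulling it back along the
action of the reversed word. The reversal of `aʲ (c a^(n-1))^(n-2) c` is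
`c (a^(n-1) c)^(n-2) aʲ`: the letter `c` lands in `{0, …, n-2}`, each block `a^(n-1) c` acts as
`q ↦ max (q - 1) 0`, so the `n - 2` blocks bring every state to `0`, and `aʲ` then moves it to `j`.
The word thus acts as the constant map `j`, and the preimage of a set under a constant map is
everything or nothing. -/

theorem DFA.foldl_preimage_step_eq_preimage_evalFrom {α σ : Type*} (M : DFA α σ)
    (S : Set σ) (w : List α) :
    w.foldl (fun S x => (M.step · x) ⁻¹' S) S = (M.evalFrom · w.reverse) ⁻¹' S := by
  induction w generalizing S with
  | nil => rfl
  | cons x w ih =>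
    ext q
    simp [ih, DFA.evalFrom_append_singleton]

namespace SCPaper

variable {n : ℕ} (h : 0 < n)

theorem rword_eq_preimage (S : Set (Fin n)) (w : List (Fin 3)) :
    rword n h S w = ((Udfa n h).evalFrom · w.reverse) ⁻¹' S :=
  (Udfa n h).foldl_preimage_step_eq_preimage_evalFrom S w

theorem udfa_step_zero (q : Fin n) : (Udfa n h).step q 0 = cyc n q := rfl

theorem udfa_step_two (q : Fin n) : (Udfa n h).step q 2 = sing n q := rfl

theorem udfa_evalFrom_replicate_zero_val (q : Fin n) (m : ℕ) :
    ((Udfa n h).evalFrom q (List.replicate m 0)).val = (q.val + m) % n := by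
  induction m with
  | zero => simp [Nat.mod_eq_of_lt q.isLt]
  | succ m ih =>
    rw [List.replicate_succ', DFA.evalFrom_append_singleton, udfa_step_zero, cyc]
    simp only [ih, Nat.mod_add_mod, Nat.add_assoc]

theorem sing_val_le (q : Fin n) : (sing n q).val ≤ n - 2 := by
  unfold sing
  split_ifs
  · simp
  · omega

def decrBlock (n : ℕ) : List (Fin 3) := List.replicate (n - 1) 0 ++ [2]

-- truncated subtraction: the block fixes `0`
theorem udfa_evalFrom_decrBlock_val (q : Fin n) :
    ((Udfa n h).evalFrom q (decrBlock n)).val = q.val - 1 := by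
  rw [decrBlock, DFA.evalFrom_append_singleton, udfa_step_two]
  have hp := udfa_evalFrom_replicate_zero_val h q (n - 1)
  set p := (Udfa n h).evalFrom q (List.replicate (n - 1) 0)
  have hq := q.isLt
  rcases Nat.eq_zero_or_pos q.val with hq0 | hq0
  · have : p.val = n - 1 := by rw [hp, hq0, Nat.zero_add, Nat.mod_eq_of_lt (by omega)]
    simp [sing, this, hq0]
  · have : p.val = q.val - 1 := by
      rw [hp, show q.val + (n - 1) = q.val - 1 + n by omega, Nat.add_mod_right,
        Nat.mod_eq_of_lt (by omega)]
    simp [sing, this, show q.val - 1 ≠ n - 1 by omega]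

theorem udfa_evalFrom_decrBlocks_val (q : Fin n) (k : ℕ) :
    ((Udfa n h).evalFrom q (List.replicate k (decrBlock n)).flatten).val = q.val - k := by
  induction k with
  | zero => rfl
  | succ k ih =>
    rw [List.replicate_succ', List.flatten_append, DFA.evalFrom_of_append, List.flatten_singleton,
      udfa_evalFrom_decrBlock_val, ih, Nat.sub_sub]

def collapseWord (n : ℕ) (j : Fin n) : List (Fin 3) :=
  List.replicate j.val 0 ++ (List.replicate (n - 2) (2 :: List.replicate (n - 1) 0)).flatten ++ [2]

theorem reverse_collapseWord (j : Fin n) :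
    (collapseWord n j).reverse =
      [2] ++ (List.replicate (n - 2) (decrBlock n)).flatten ++ List.replicate j.val 0 := by
  simp [collapseWord, decrBlock, List.reverse_flatten]

theorem udfa_evalFrom_reverse_collapseWord (q j : Fin n) :
    (Udfa n h).evalFrom q (collapseWord n j).reverse = j := by
  rw [reverse_collapseWord, DFA.evalFrom_of_append, DFA.evalFrom_of_append, DFA.evalFrom_singleton,
    udfa_step_two]
  have hzero := udfa_evalFrom_decrBlocks_val h (sing n q) (n - 2)
  rw [Nat.sub_eq_zero_of_le (sing_val_le q)] at hzero
  ext
  rw [udfa_evalFrom_replicate_zero_val, hzero, Nat.zero_add, Nat.mod_eq_of_lt j.isLt]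

theorem rword_collapseWord (S : Set (Fin n)) (j : Fin n) :
    rword n h S (collapseWord n j) = (fun _ => j) ⁻¹' S := by
  simp only [rword_eq_preimage, udfa_evalFrom_reverse_collapseWord]

end SCPaper

open SCPaper

theorem reversed_subsets_to_full_and_empty (n : ℕ) (hn : 3 ≤ n) :
    (∀ S T : Set (Fin n), S ≠ T → ∃ w : List (Fin 3),
      (rword n (by omega) S w = Set.univ ∧ rword n (by omega) T w = ∅) ∨
      (rword n (by omega) S w = ∅ ∧ rword n (by omega) T w = Set.univ)) ∧
    (∀ S T : Set (Fin n), ∀ j : Fin n, j ∈ S → j ∉ T →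
      rword n (by omega) S
        (List.replicate j.val (0 : Fin 3) ++
          (List.replicate (n - 2) ((2 : Fin 3) :: List.replicate (n - 1) (0 : Fin 3))).flatten ++ [(2 : Fin 3)]) = Set.univ ∧
      rword n (by omega) T
        (List.replicate j.val (0 : Fin 3) ++
          (List.replicate (n - 2) ((2 : Fin 3) :: List.replicate (n - 1) (0 : Fin 3))).flatten ++ [(2 : Fin 3)]) = ∅) := by
  have hpos : 0 < n := by omega
  have separate : ∀ S T : Set (Fin n), ∀ j : Fin n, j ∈ S → j ∉ T →
      rword n hpos S (collapseWord n j) = Set.univ ∧ rword n hpos T (collapseWord n j) = ∅ :=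
    fun S T j hS hT => by
      simp only [rword_collapseWord]
      exact ⟨Set.preimage_const_of_mem hS, Set.preimage_const_of_notMem hT⟩
  refine ⟨fun S T hST => ?_, separate⟩
  obtain ⟨j, ⟨hS, hT⟩ | ⟨hT, hS⟩⟩ : ∃ j, (j ∈ S ∧ j ∉ T) ∨ (j ∈ T ∧ j ∉ S) := by
    by_contra! hsame
    exact hST (Set.ext fun j => ⟨(hsame j).1, (hsame j).2⟩)
  · exact ⟨_, Or.inl (separate S T j hS hT)⟩
  · exact ⟨_, Or.inr (separate T S j hT hS).symm⟩
end
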